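/- Let 0 < k < n and let M = (E, ρ) be a matroid that has no minor isomorphic to the uniform matroid U_n^k. Then for every pair of cyclic flats X ⊊ Y of M with no cyclic flat strictly between them (a covering pair in the lattice of cyclic flats), either ρ(Y) − ρ(X) < k or η(Y) − η(X) < n − k, where η(A) = |A| − ρ(A). -/

import Mathlib

open Finset

structure FinMatroid (α : Type*) [DecidableEq α] where
  E : Finset α
  rk : Finset α → ℕ
  rk_le_card : ∀ A, A ⊆ E → rk A ≤ A.card
  rk_mono : ∀ A B, A ⊆ B → B ⊆ E → rk A ≤ rk B
  rk_submod : ∀ A B, A ⊆ E → B ⊆ E → rk (A ∪ B) + rk (A ∩ B) ≤ rk A + rk B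

namespace FinMatroid

variable {α : Type*} [DecidableEq α]

/-- The closure operator `cl(A) = {e ∈ E : ρ(A ∪ {e}) = ρ(A)}`. -/
def cl (M : FinMatroid α) (A : Finset α) : Finset α :=
  M.E.filter fun e => M.rk (insert e A) = M.rk A

/-- The cyclic operator `cyc(A) = {e ∈ A : ρ(A − {e}) = ρ(A)}`. -/
def cyc (M : FinMatroid α) (A : Finset α) : Finset α :=
  A.filter fun e => M.rk (A.erase e) = M.rk A

/-- A flat is a set fixed by the closure operator. -/
def IsFlat (M : FinMatroid α) (F : Finset α) : Prop :=
  F ⊆ M.E ∧ M.cl F = F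

/-- A cyclic set is a set fixed by the cyclic operator. -/
def IsCyclic (M : FinMatroid α) (U : Finset α) : Prop :=
  U ⊆ M.E ∧ M.cyc U = U

/-- A cyclic flat is a set fixed by both the closure and the cyclic operators. -/
def IsCyclicFlat (M : FinMatroid α) (Z : Finset α) : Prop :=
  Z ⊆ M.E ∧ M.cl Z = Z ∧ M.cyc Z = Z

/-- The minor `M|Y/X`: restriction to `Y` followed by contraction of `X`. -/
def minor (M : FinMatroid α) (X Y : Finset α) (hXY : X ⊆ Y) (hY : Y ⊆ M.E) :
    FinMatroid α where
  E := Y \ X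
  rk A := M.rk (A ∪ X) - M.rk X
  rk_le_card := by
    intro A hA
    have hAE : A ⊆ M.E := fun a ha => hY (mem_sdiff.mp (hA ha)).1
    have hXE : X ⊆ M.E := hXY.trans hY
    have h1 := M.rk_submod A X hAE hXE
    have h2 := M.rk_le_card A hAE
    show M.rk (A ∪ X) - M.rk X ≤ A.card
    omega
  rk_mono := by
    intro A B hAB hB
    have hBE : B ⊆ M.E := fun a ha => hY (mem_sdiff.mp (hB ha)).1
    have hBX : B ∪ X ⊆ M.E := union_subset hBE (hXY.trans hY)
    have := M.rk_mono (A ∪ X) (B ∪ X) (union_subset_union hAB Subset.rfl) hBX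
    show M.rk (A ∪ X) - M.rk X ≤ M.rk (B ∪ X) - M.rk X
    omega
  rk_submod := by
    intro A B hA hB
    have hAE : A ⊆ M.E := fun a ha => hY (mem_sdiff.mp (hA ha)).1
    have hBE : B ⊆ M.E := fun a ha => hY (mem_sdiff.mp (hB ha)).1
    have hXE : X ⊆ M.E := hXY.trans hY
    have hAX : A ∪ X ⊆ M.E := union_subset hAE hXE
    have hBX : B ∪ X ⊆ M.E := union_subset hBE hXE
    have hsub := M.rk_submod (A ∪ X) (B ∪ X) hAX hBX
    have e1 : (A ∪ X) ∪ (B ∪ X) = (A ∪ B) ∪ X := by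
      ext x; simp only [mem_union]; tauto
    have e2 : (A ∪ X) ∩ (B ∪ X) = (A ∩ B) ∪ X := by
      ext x; simp only [mem_union, mem_inter]; tauto
    rw [e1, e2] at hsub
    have h1 : M.rk X ≤ M.rk (A ∪ X) := M.rk_mono X _ subset_union_right hAX
    have h2 : M.rk X ≤ M.rk (B ∪ X) := M.rk_mono X _ subset_union_right hBX
    have hIX : (A ∩ B) ∪ X ⊆ M.E := union_subset (inter_subset_left.trans hAE) hXE
    have hUX : (A ∪ B) ∪ X ⊆ M.E := union_subset (union_subset hAE hBE) hXE
    have h3 : M.rk X ≤ M.rk ((A ∩ B) ∪ X) := M.rk_mono X _ subset_union_right hIX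
    have h4 : M.rk X ≤ M.rk ((A ∪ B) ∪ X) := M.rk_mono X _ subset_union_right hUX
    show M.rk ((A ∪ B) ∪ X) - M.rk X + (M.rk ((A ∩ B) ∪ X) - M.rk X) ≤
      (M.rk (A ∪ X) - M.rk X) + (M.rk (B ∪ X) - M.rk X)
    omega

/-- The restriction `M|Y`. -/
def restrict (M : FinMatroid α) (Y : Finset α) (hY : Y ⊆ M.E) : FinMatroid α where
  E := Y
  rk := M.rk
  rk_le_card := fun A hA => M.rk_le_card A (hA.trans hY)
  rk_mono := fun A B hAB hB => M.rk_mono A B hAB (hB.trans hY)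
  rk_submod := fun A B hA hB => M.rk_submod A B (hA.trans hY) (hB.trans hY)

/-- `M` is binary: it is the matroid of linear dependence of a family of
vectors over the field with two elements. -/
def IsBinary (M : FinMatroid α) : Prop :=
  ∃ (m : ℕ) (φ : α → (Fin m → ZMod 2)),
    ∀ A : Finset α, A ⊆ M.E →
      M.rk A = Module.finrank (ZMod 2) (Submodule.span (ZMod 2) (φ '' (A : Set α)))

def Simple (M : FinMatroid α) : Prop :=
  (∀ e ∈ M.E, M.rk {e} = 1) ∧
    ∀ e ∈ M.E, ∀ f ∈ M.E, e ≠ f → M.rk ({e, f} : Finset α) = 2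

def NoIsthmus (M : FinMatroid α) : Prop :=
  ∀ e ∈ M.E, M.rk (M.E.erase e) = M.rk M.E

def IsMinDist (M : FinMatroid α) (d : ℕ) : Prop :=
  (∃ X ⊆ M.E, M.rk (M.E \ X) < M.rk M.E ∧ X.card = d) ∧
    ∀ X ⊆ M.E, M.rk (M.E \ X) < M.rk M.E → d ≤ X.card

def IsAtomCF (M : FinMatroid α) (Z : Finset α) : Prop :=
  M.IsCyclicFlat Z ∧ Z ≠ ∅ ∧ ¬ ∃ Z', M.IsCyclicFlat Z' ∧ ∅ ⊂ Z' ∧ Z' ⊂ Z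

def IsCoatomCF (M : FinMatroid α) (Z : Finset α) : Prop :=
  M.IsCyclicFlat Z ∧ Z ⊂ M.E ∧ ¬ ∃ Z', M.IsCyclicFlat Z' ∧ Z ⊂ Z' ∧ Z' ⊂ M.E

def IsCircuit (M : FinMatroid α) (C : Finset α) : Prop :=
  C ⊆ M.E ∧ M.rk C < C.card ∧ ∀ D ⊂ C, M.rk D = D.card

end FinMatroid

/-!
Let `r = ρ(Y) − ρ(X) ≥ k`. A nonempty cyclic set `C` of the minor `M|Y/X` lifts to the cyclic
set `C ∪ X` of `M`, whose closure is a cyclic flat strictly above `X` and inside `Y`; by the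
covering hypothesis it is `Y`, so `C` spans the minor. A matroid in which every nonempty cyclic
set is spanning is uniform, so `M|Y/X` is `U^r` on `|Y − X| = r + (η(Y) − η(X))` elements.
Contracting `r − k` of them and restricting to `n` others gives a `U_n^k`-minor as soon as
`η(Y) − η(X) ≥ n − k`.
-/

namespace FinMatroid

variable {α : Type*} [DecidableEq α] (M : FinMatroid α)

theorem mem_cl {A : Finset α} {e : α} : e ∈ M.cl A ↔ e ∈ M.E ∧ M.rk (insert e A) = M.rk A :=
  mem_filter

theorem cl_subset_E (A : Finset α) : M.cl A ⊆ M.E :=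
  filter_subset _ _

theorem subset_cl {A : Finset α} (hA : A ⊆ M.E) : A ⊆ M.cl A := fun e he =>
  M.mem_cl.2 ⟨hA he, by rw [insert_eq_of_mem he]⟩

theorem rk_union_eq_of_subset_cl {A B : Finset α} (hA : A ⊆ M.E) (hB : B ⊆ M.cl A) :
    M.rk (A ∪ B) = M.rk A := by
  induction B using Finset.induction_on with
  | empty => rw [union_empty]
  | insert b B hb ih =>
    obtain ⟨hbE, hbA⟩ := M.mem_cl.1 (hB (mem_insert_self b B))
    have hBE : B ⊆ M.E := ((subset_insert b B).trans hB).trans (M.cl_subset_E A)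
    have hAB := ih ((subset_insert b B).trans hB)
    have hsub := M.rk_submod (insert b A) (A ∪ B) (insert_subset hbE hA) (union_subset hA hBE)
    rw [show insert b A ∪ (A ∪ B) = A ∪ insert b B by grind] at hsub
    have hinter := M.rk_mono A (insert b A ∩ (A ∪ B)) (by grind)
      (inter_subset_left.trans (insert_subset hbE hA))
    have hmono := M.rk_mono A (A ∪ insert b B) subset_union_left
      (union_subset hA (insert_subset hbE hBE))
    omega

theorem rk_cl {A : Finset α} (hA : A ⊆ M.E) : M.rk (M.cl A) = M.rk A := by
  rw [← M.rk_union_eq_of_subset_cl hA subset_rfl, union_eq_right.2 (M.subset_cl hA)]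

theorem cl_subset_cl {A B : Finset α} (hAB : A ⊆ B) (hB : B ⊆ M.E) : M.cl A ⊆ M.cl B := by
  intro e he
  obtain ⟨heE, he⟩ := M.mem_cl.1 he
  have hsub := M.rk_submod (insert e A) B (insert_subset heE (hAB.trans hB)) hB
  rw [show insert e A ∪ B = insert e B by grind] at hsub
  have hinter := M.rk_mono A (insert e A ∩ B) (by grind)
    (inter_subset_right.trans hB)
  have hmono := M.rk_mono B (insert e B) (subset_insert e B) (insert_subset heE hB)
  exact M.mem_cl.2 ⟨heE, by omega⟩

theorem cl_cl {A : Finset α} (hA : A ⊆ M.E) : M.cl (M.cl A) = M.cl A := by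
  refine Subset.antisymm (fun e he => ?_) (M.subset_cl (M.cl_subset_E A))
  obtain ⟨heE, he⟩ := M.mem_cl.1 he
  have h1 := M.rk_mono A (insert e A) (subset_insert e A) (insert_subset heE hA)
  have h2 := M.rk_mono (insert e A) (insert e (M.cl A)) (insert_subset_insert e (M.subset_cl hA))
    (insert_subset heE (M.cl_subset_E A))
  exact M.mem_cl.2 ⟨heE, by rw [M.rk_cl hA] at he; omega⟩

variable {M}

theorem IsCyclic.rk_erase {U : Finset α} (hU : M.IsCyclic U) (e : α) :
    M.rk (U.erase e) = M.rk U := by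
  by_cases he : e ∈ U
  · rw [← hU.2] at he
    exact (mem_filter.1 he).2
  · rw [erase_eq_of_notMem he]

theorem IsCyclic.rk_erase_of_subset {U A : Finset α} (hU : M.IsCyclic U) (hUA : U ⊆ A)
    (hA : A ⊆ M.E) {e : α} (he : e ∈ U) : M.rk (A.erase e) = M.rk A := by
  have hsub := M.rk_submod U (A.erase e) hU.1 ((erase_subset e A).trans hA)
  rw [show U ∪ A.erase e = A by grind, show U ∩ A.erase e = U.erase e by grind,
    hU.rk_erase] at hsub
  have := M.rk_mono (A.erase e) A (erase_subset e A) hA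
  omega

theorem IsCyclic.isCyclicFlat_cl {U : Finset α} (hU : M.IsCyclic U) :
    M.IsCyclicFlat (M.cl U) := by
  refine ⟨M.cl_subset_E U, M.cl_cl hU.1, filter_eq_self.2 fun e _ => le_antisymm
    (M.rk_mono _ _ (erase_subset e _) (M.cl_subset_E U)) ?_⟩
  calc M.rk (M.cl U) = M.rk (U.erase e) := by rw [M.rk_cl hU.1, hU.rk_erase]
    _ ≤ M.rk ((M.cl U).erase e) := M.rk_mono _ _ (erase_subset_erase e (M.subset_cl hU.1))
      ((erase_subset e _).trans (M.cl_subset_E U))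

theorem IsCyclic.union_of_isCyclic_minor {X Y C : Finset α} {hXY : X ⊆ Y} {hY : Y ⊆ M.E}
    (hX : M.IsCyclic X) (hC : (M.minor X Y hXY hY).IsCyclic C) : M.IsCyclic (C ∪ X) := by
  have hCX : C ⊆ Y \ X := hC.1
  have hCXE : C ∪ X ⊆ M.E := union_subset (hCX.trans (sdiff_subset.trans hY)) hX.1
  refine ⟨hCXE, filter_eq_self.2 fun e _ => ?_⟩
  by_cases heX : e ∈ X
  · exact hX.rk_erase_of_subset subset_union_right hCXE heX
  · have hminor : M.rk (C.erase e ∪ X) - M.rk X = M.rk (C ∪ X) - M.rk X := hC.rk_erase e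
    rw [show (C ∪ X).erase e = C.erase e ∪ X by grind]
    have h1 := M.rk_mono X (C.erase e ∪ X) subset_union_right
      (union_subset ((erase_subset e C).trans (hCX.trans (sdiff_subset.trans hY))) hX.1)
    have h2 := M.rk_mono (C.erase e ∪ X) (C ∪ X)
      (union_subset_union (erase_subset e C) subset_rfl) hCXE
    omega

theorem rk_minor_eq_of_isCyclic {X Y C : Finset α} (hXY : X ⊆ Y) (hX : M.IsCyclic X)
    (hY : M.IsFlat Y) (hcov : ¬ ∃ Z, M.IsCyclicFlat Z ∧ X ⊂ Z ∧ Z ⊂ Y)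
    (hC : (M.minor X Y hXY hY.1).IsCyclic C) (hne : C.Nonempty) :
    (M.minor X Y hXY hY.1).rk C = (M.minor X Y hXY hY.1).rk (Y \ X) := by
  have hCX : C ⊆ Y \ X := hC.1
  have hCXY : C ∪ X ⊆ Y := union_subset (hCX.trans sdiff_subset) hXY
  have hCXE : C ∪ X ⊆ M.E := hCXY.trans hY.1
  have hW := (hX.union_of_isCyclic_minor hC).isCyclicFlat_cl
  have hXW : X ⊂ M.cl (C ∪ X) := by
    obtain ⟨c, hc⟩ := hne
    exact ssubset_iff_of_subset (subset_union_right.trans (M.subset_cl hCXE)) |>.2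
      ⟨c, M.subset_cl hCXE (mem_union_left X hc), (mem_sdiff.1 (hCX hc)).2⟩
  have hWY : M.cl (C ∪ X) ⊆ Y := hY.2 ▸ M.cl_subset_cl hCXY hY.1
  have hWeq : M.cl (C ∪ X) = Y := by
    by_contra hWne
    exact hcov ⟨_, hW, hXW, hWY.ssubset_of_ne hWne⟩
  show M.rk (C ∪ X) - M.rk X = M.rk ((Y \ X) ∪ X) - M.rk X
  rw [sdiff_union_of_subset hXY, ← hWeq, M.rk_cl hCXE]

variable (M)

theorem exists_isCyclic_subset_of_rk_lt_card {A : Finset α} (hA : A ⊆ M.E)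
    (hlt : M.rk A < A.card) : ∃ C ⊆ A, C.Nonempty ∧ M.IsCyclic C := by
  induction A using Finset.strongInduction with
  | H A ih =>
  by_cases hcyc : ∀ e ∈ A, M.rk (A.erase e) = M.rk A
  · exact ⟨A, subset_rfl, card_pos.1 (by omega), hA, filter_eq_self.2 hcyc⟩
  push Not at hcyc
  obtain ⟨e, he, hrk⟩ := hcyc
  have hmono := M.rk_mono (A.erase e) A (erase_subset e A) hA
  obtain ⟨C, hCA, hC⟩ := ih (A.erase e) (erase_ssubset he) ((erase_subset e A).trans hA)
    (by rw [card_erase_of_mem he]; omega)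
  exact ⟨C, hCA.trans (erase_subset e A), hC⟩

theorem rk_eq_min_of_isCyclic_spanning
    (h : ∀ C, C.Nonempty → M.IsCyclic C → M.rk C = M.rk M.E) {A : Finset α} (hA : A ⊆ M.E) :
    M.rk A = min A.card (M.rk M.E) := by
  have hcard := M.rk_le_card A hA
  have hspan := M.rk_mono A M.E hA subset_rfl
  by_contra hne
  obtain ⟨C, hCA, hC, hCcyc⟩ := M.exists_isCyclic_subset_of_rk_lt_card hA (by omega)
  have := M.rk_mono C A hCA hA
  have := h C hC hCcyc
  omega

def HasUniformMinor (n k : ℕ) : Prop :=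
  ∃ X Y : Finset α, X ⊆ Y ∧ Y ⊆ M.E ∧ (Y \ X).card = n ∧
    ∀ A ⊆ Y \ X, M.rk (A ∪ X) - M.rk X = min A.card k

theorem hasUniformMinor_of_rk_eq_min {n k r : ℕ} (hM : ∀ A ⊆ M.E, M.rk A = min A.card r)
    (hkr : k ≤ r) (hcard : n + (r - k) ≤ M.E.card) : M.HasUniformMinor n k := by
  obtain ⟨I, hIE, hI⟩ := M.E.exists_subset_card_eq (n := r - k) (by omega)
  obtain ⟨T, hTE, hT⟩ := (M.E \ I).exists_subset_card_eq (n := n)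
    (by rw [card_sdiff_of_subset hIE]; omega)
  have hTI : Disjoint T I := disjoint_of_subset_left hTE sdiff_disjoint
  refine ⟨I, T ∪ I, subset_union_right, union_subset (hTE.trans sdiff_subset) hIE, ?_, ?_⟩
  · rw [union_sdiff_cancel_right hTI, hT]
  · intro A hA
    rw [union_sdiff_cancel_right hTI] at hA
    rw [hM _ (union_subset (hA.trans (hTE.trans sdiff_subset)) hIE), hM I hIE,
      card_union_of_disjoint (disjoint_of_subset_left hA hTI), hI]
    omega

variable {M}

theorem HasUniformMinor.of_minor {X Y : Finset α} {hXY : X ⊆ Y} {hY : Y ⊆ M.E} {n k : ℕ}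
    (h : (M.minor X Y hXY hY).HasUniformMinor n k) : M.HasUniformMinor n k := by
  obtain ⟨I, J, hIJ, hJ, hcard, hrk⟩ := h
  have hJ : J ⊆ Y \ X := hJ
  have hJE : J ∪ X ⊆ M.E := union_subset (hJ.trans (sdiff_subset.trans hY)) (hXY.trans hY)
  have hdiff : (J ∪ X) \ (I ∪ X) = J \ I := by
    ext x
    have := @hJ x
    simp only [mem_sdiff, mem_union] at this ⊢
    tauto
  refine ⟨I ∪ X, J ∪ X, union_subset_union hIJ subset_rfl, hJE, hdiff ▸ hcard, ?_⟩
  intro A hA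
  rw [hdiff] at hA
  have hminor : M.rk (A ∪ I ∪ X) - M.rk X - (M.rk (I ∪ X) - M.rk X) = min A.card k := hrk A hA
  have hAIX : A ∪ I ∪ X ⊆ J ∪ X :=
    union_subset_union (union_subset (hA.trans sdiff_subset) hIJ) subset_rfl
  have h1 := M.rk_mono X (I ∪ X) subset_union_right ((union_subset_union hIJ subset_rfl).trans hJE)
  have h2 := M.rk_mono (I ∪ X) (A ∪ I ∪ X) (union_subset_union subset_union_right subset_rfl)
    (hAIX.trans hJE)
  rw [← union_assoc]
  omega

end FinMatroid

theorem covering_edge_bound_general {α : Type*} [DecidableEq α] (M : FinMatroid α) (n k : ℕ)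
    (hminor : ¬ ∃ X Y : Finset α, X ⊆ Y ∧ Y ⊆ M.E ∧ (Y \ X).card = n ∧
      ∀ A ⊆ Y \ X, M.rk (A ∪ X) - M.rk X = min A.card k)
    (X Y : Finset α) (hX : M.IsCyclicFlat X) (hY : M.IsCyclicFlat Y) (hXY : X ⊂ Y)
    (hcov : ¬ ∃ Z, M.IsCyclicFlat Z ∧ X ⊂ Z ∧ Z ⊂ Y) :
    M.rk Y - M.rk X < k ∨ (Y.card - M.rk Y) - (X.card - M.rk X) < n - k := by
  by_contra! hbig
  set N := M.minor X Y hXY.subset hY.1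
  have hrkN : N.rk N.E = M.rk Y - M.rk X := by
    show M.rk ((Y \ X) ∪ X) - M.rk X = _
    rw [sdiff_union_of_subset hXY.subset]
  have hN : ∀ A ⊆ N.E, N.rk A = min A.card (M.rk Y - M.rk X) := fun A hA =>
    hrkN ▸ N.rk_eq_min_of_isCyclic_spanning (fun C hne hC =>
      FinMatroid.rk_minor_eq_of_isCyclic hXY.subset ⟨hX.1, hX.2.2⟩ ⟨hY.1, hY.2.1⟩ hcov hC hne) hA
  refine hminor (FinMatroid.HasUniformMinor.of_minor (N.hasUniformMinor_of_rk_eq_min hN hbig.1 ?_))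
  have hNE : N.E.card = Y.card - X.card := card_sdiff_of_subset hXY.subset
  have := N.rk_le_card N.E subset_rfl
  have := M.rk_le_card X hX.1
  have := M.rk_le_card Y hY.1
  have := M.rk_mono X Y hXY.subset hY.1
  omega

/-- If `0 < k < n` and `M` has no minor isomorphic to the uniform
matroid `U_n^k`, then for every covering pair `X ⊊ Y` in the lattice of cyclic flats,
either `ρ(Y) − ρ(X) < k` or `η(Y) − η(X) < n − k`. -/
theorem covering_edge_bound {α : Type*} [DecidableEq α] (M : FinMatroid α) (n k : ℕ)
    (hk : 0 < k) (hkn : k < n)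
    (hminor : ¬ ∃ X Y : Finset α, X ⊆ Y ∧ Y ⊆ M.E ∧ (Y \ X).card = n ∧
      ∀ A ⊆ Y \ X, M.rk (A ∪ X) - M.rk X = min A.card k)
    (X Y : Finset α) (hX : M.IsCyclicFlat X) (hY : M.IsCyclicFlat Y) (hXY : X ⊂ Y)
    (hcov : ¬ ∃ Z, M.IsCyclicFlat Z ∧ X ⊂ Z ∧ Z ⊂ Y) :
    M.rk Y - M.rk X < k ∨ (Y.card - M.rk Y) - (X.card - M.rk X) < n - k :=
  covering_edge_bound_general M n k hminor X Y hX hY hXY hcov
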